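/- arXiv:1102.1984 — 3 statements merged into one kernel-verified Lean document; each statement's English description precedes it below -/
import Mathlib

section
/- Let n ≥ 1, let α be a loose stable n-set in ZMod (2n+2), and let β be an outer neighbor of α. Then |β ∩ (α ⊕ 1)| = n − 1 and |β ∩ (α ⊖ 1)| = n − 1. -/
/-!
Common definitions: stable n-sets in `ZMod (2*n+2)`, tight/loose sets, shifts,
outer neighbors, parity, the sets `P_i`, and adjacency in the stable Kneser
graph `SG_{n,2}` (two stable n-sets are adjacent iff they are disjoint).
-/

instance (n : ℕ) : NeZero (2 * n + 2) := ⟨by omega⟩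

/-- A stable n-set: a finite subset of `ZMod (2n+2)` of cardinality `n`
containing no two (cyclically) consecutive elements. -/
def IsStable (n : ℕ) (α : Finset (ZMod (2 * n + 2))) : Prop :=
  α.card = n ∧ ∀ i : ZMod (2 * n + 2), ¬(i ∈ α ∧ i + 1 ∈ α)

/-- A set is tight if it has the form `{i, i+2, i+4, …, i+2(n-1)}`. -/
def IsTight (n : ℕ) (α : Finset (ZMod (2 * n + 2))) : Prop :=
  ∃ i : ZMod (2 * n + 2), α = (Finset.range n).image (fun k : ℕ => i + 2 * (k : ZMod (2 * n + 2)))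

/-- `α ⊕ j`, the shift of `α` by `j`. -/
def oplus (n : ℕ) (α : Finset (ZMod (2 * n + 2))) (j : ZMod (2 * n + 2)) :
    Finset (ZMod (2 * n + 2)) :=
  α.image (fun a => a + j)

/-- `α ⊖ j`, the shift of `α` by `-j`. -/
def ominus (n : ℕ) (α : Finset (ZMod (2 * n + 2))) (j : ZMod (2 * n + 2)) :
    Finset (ZMod (2 * n + 2)) :=
  α.image (fun a => a - j)

/-- `β` is an outer neighbor of `α`: they are disjoint and
`β = ((α \ {a}) ⊕ 1) ∪ {a + 2}` for some `a ∈ α`. -/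
def OuterNbr (n : ℕ) (α β : Finset (ZMod (2 * n + 2))) : Prop :=
  Disjoint α β ∧ ∃ a ∈ α, β = oplus n (α.erase a) 1 ∪ {a + 2}

/-- The parity of an element of `ZMod (2n+2)`: its image in `ZMod 2` under the
natural ring homomorphism. -/
def parity (n : ℕ) (a : ZMod (2 * n + 2)) : ZMod 2 :=
  ZMod.castHom (show (2 : ℕ) ∣ 2 * n + 2 from ⟨n + 1, by ring⟩) (ZMod 2) a

/-- Adjacency in the stable Kneser graph `SG_{n,2}`: two distinct stable n-sets
are adjacent iff they are disjoint. -/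
def SGAdj (n : ℕ) (α β : Finset (ZMod (2 * n + 2))) : Prop :=
  IsStable n α ∧ IsStable n β ∧ α ≠ β ∧ Disjoint α β

/-- `P_i`: stable n-sets with exactly `i` even elements and `n - i` odd elements. -/
def Pset (n i : ℕ) : Set (Finset (ZMod (2 * n + 2))) :=
  {α | IsStable n α ∧ (α.filter fun a => parity n a = 0).card = i ∧
       (α.filter fun a => parity n a = 1).card = n - i}

/-!
If every element `x` of an `n`-set `α ⊆ ZMod (2n+2)` but one had `x - 2 ∈ α`, following these
predecessors would exhibit `α` as a progression `i, i + 2, …, i + 2(n-1)`, i.e. tight. So for loose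
`α` at least two elements of `α` lie outside `α ⊕ 2`, and `|α ∩ (α ⊖ 2)| ≤ n - 2`. Stability means
that `α` and `α ⊖ 2` both avoid the `n` points of `α ⊖ 1`, which leaves them only `n + 2` points;
hence `|α ∩ (α ⊖ 2)| = n - 2` and `α ∪ (α ⊖ 2)` is the complement of `α ⊖ 1`.

For `β = ((α \ {a}) ⊕ 1) ∪ {a + 2}` disjoint from `α`, the point `a + 1` is neither in `α` nor in
`α ⊖ 1`, so `a + 3 ∈ α`. Then `β ∩ (α ⊕ 1) = (α \ {a}) ⊕ 1` and
`β ∩ (α ⊖ 1) = ((α ∩ (α ⊖ 2)) ⊕ 1) ∪ {a + 2}`.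
-/

open Finset

section Shift

variable {n : ℕ} {α : Finset (ZMod (2 * n + 2))} {j x : ZMod (2 * n + 2)}

@[simp]
lemma mem_oplus : x ∈ oplus n α j ↔ x - j ∈ α := by
  simp [oplus, sub_eq_add_neg]

@[simp]
lemma mem_ominus : x ∈ ominus n α j ↔ x + j ∈ α := by
  simp [ominus, sub_eq_iff_eq_add]

lemma card_oplus (α : Finset (ZMod (2 * n + 2))) (j : ZMod (2 * n + 2)) :
    (oplus n α j).card = α.card :=
  card_image_of_injective _ (add_left_injective j)

lemma card_ominus (α : Finset (ZMod (2 * n + 2))) (j : ZMod (2 * n + 2)) :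
    (ominus n α j).card = α.card :=
  card_image_of_injective _ sub_left_injective

lemma card_inter_ominus_eq_card_inter_oplus :
    (α ∩ ominus n α j).card = (α ∩ oplus n α j).card :=
  card_nbij' (· + j) (· - j) (by intro x; simp [and_comm]) (by intro x; simp [and_comm])
    (by intro x _; simp) (by intro x _; simp)

end Shift

lemma Finset.subset_image_add_nsmul_of_sub_mem {G : Type*} [AddCommGroup G] [DecidableEq G]
    {s : Finset G} {g d : G} (hg : s.card < addOrderOf g)
    (hpred : ∀ x ∈ s, x ≠ d → x - g ∈ s) :
    s ⊆ (range s.card).image (fun k => d + k • g) := by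
  intro x hx
  by_contra hx'
  have hne : ∀ k < s.card, x - k • g ≠ d := fun k hk h =>
    hx' (mem_image.2 ⟨k, mem_range.2 hk, by rw [← h, sub_add_cancel]⟩)
  have hchain : ∀ k ≤ s.card, x - k • g ∈ s := by
    intro k hk
    induction k with
    | zero => simpa
    | succ k ih =>
      rw [succ_nsmul, ← sub_sub]
      exact hpred _ (ih (by omega)) (hne k (by omega))
  have := le_card_of_inj_on_range (n := s.card + 1) (fun k => x - k • g)
    (fun k hk => hchain k (by omega)) fun i hi k hk h =>
      nsmul_injOn_Iio_addOrderOf (by simp only [Set.mem_Iio]; omega)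
        (by simp only [Set.mem_Iio]; omega) (sub_right_injective h)
  omega

lemma ZMod.addOrderOf_two (n : ℕ) : addOrderOf (2 : ZMod (2 * n + 2)) = n + 1 := by
  have h := ZMod.addOrderOf_coe 2 (n := 2 * n + 2) (by omega)
  rw [Nat.cast_ofNat] at h
  rw [h, show 2 * n + 2 = 2 * (n + 1) by ring, Nat.gcd_mul_right_left]
  omega

section Tight

variable {n : ℕ} {α : Finset (ZMod (2 * n + 2))}

lemma isTight_of_sub_two_mem {d : ZMod (2 * n + 2)} (hcard : α.card = n)
    (hpred : ∀ x ∈ α, x ≠ d → x - 2 ∈ α) : IsTight n α := by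
  have hsub := subset_image_add_nsmul_of_sub_mem (by rw [hcard, ZMod.addOrderOf_two]; omega) hpred
  have hprog : (fun k : ℕ => d + k • (2 : ZMod (2 * n + 2))) =
      fun k : ℕ => d + 2 * (k : ZMod (2 * n + 2)) := by
    funext k; rw [nsmul_eq_mul]; ring
  rw [hprog, hcard] at hsub
  refine ⟨d, eq_of_subset_of_card_le hsub ?_⟩
  exact card_image_le.trans (by rw [card_range, hcard])

lemma two_le_card_sdiff_oplus_two (hcard : α.card = n) (hloose : ¬IsTight n α) :
    2 ≤ (α \ oplus n α 2).card := by
  by_contra! h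
  obtain ⟨d, hd⟩ := card_le_one_iff_subset_singleton.1 (Nat.lt_succ_iff.1 h)
  refine hloose (isTight_of_sub_two_mem (d := d) hcard fun x hx hxd => ?_)
  by_contra hx2
  exact hxd (mem_singleton.1 (hd (mem_sdiff.2 ⟨hx, by simpa using hx2⟩)))

end Tight

namespace IsStable

variable {n : ℕ} {α : Finset (ZMod (2 * n + 2))} {a x : ZMod (2 * n + 2)}

lemma add_one_notMem (hα : IsStable n α) (hx : x ∈ α) : x + 1 ∉ α :=
  fun h => hα.2 x ⟨hx, h⟩

lemma union_ominus_two_subset_compl (hα : IsStable n α) :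
    α ∪ ominus n α 2 ⊆ (ominus n α 1)ᶜ := by
  intro x hx
  rw [mem_compl, mem_ominus]
  rcases mem_union.1 hx with h | h
  · exact hα.add_one_notMem h
  · exact fun h1 => hα.add_one_notMem h1 (by simpa [add_assoc, one_add_one_eq_two] using h)

lemma card_compl_ominus_one (hα : IsStable n α) : (ominus n α 1)ᶜ.card = n + 2 := by
  rw [card_compl, card_ominus, hα.1, ZMod.card]
  omega

lemma card_union_ominus_two (hα : IsStable n α) (hloose : ¬IsTight n α) :
    (α ∪ ominus n α 2).card = n + 2 := by
  have hunion := card_le_card hα.union_ominus_two_subset_compl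
  have hsplit := card_union_add_card_inter α (ominus n α 2)
  have hpart := card_inter_add_card_sdiff α (oplus n α 2)
  have hsdiff := two_le_card_sdiff_oplus_two hα.1 hloose
  rw [card_inter_ominus_eq_card_inter_oplus, card_ominus, hα.1] at hsplit
  rw [hα.card_compl_ominus_one] at hunion
  rw [hα.1] at hpart
  omega

lemma card_inter_ominus_two_add_two (hα : IsStable n α) (hloose : ¬IsTight n α) :
    (α ∩ ominus n α 2).card + 2 = n := by
  have := card_union_add_card_inter α (ominus n α 2)
  rw [hα.card_union_ominus_two hloose, card_ominus, hα.1] at this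
  omega

lemma union_ominus_two_eq_compl (hα : IsStable n α) (hloose : ¬IsTight n α) :
    α ∪ ominus n α 2 = (ominus n α 1)ᶜ :=
  eq_of_subset_of_card_le hα.union_ominus_two_subset_compl
    (by rw [hα.card_union_ominus_two hloose, hα.card_compl_ominus_one])

lemma add_three_mem (hα : IsStable n α) (hloose : ¬IsTight n α) (ha : a ∈ α)
    (ha2 : a + 2 ∉ α) : a + 3 ∈ α := by
  have hcompl : a + 1 ∈ (ominus n α 1)ᶜ := by
    simpa [mem_compl, add_assoc, one_add_one_eq_two] using ha2
  rw [← hα.union_ominus_two_eq_compl hloose] at hcompl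
  rcases mem_union.1 hcompl with h | h
  · exact absurd h (hα.add_one_notMem ha)
  · simpa [add_assoc, show (1 : ZMod (2 * n + 2)) + 2 = 3 by norm_num] using h

end IsStable

section OuterNeighbor

variable {n : ℕ} {α : Finset (ZMod (2 * n + 2))} {a : ZMod (2 * n + 2)}

lemma oplus_erase_union_inter_oplus_one (ha1 : a + 1 ∉ α) :
    (oplus n (α.erase a) 1 ∪ {a + 2}) ∩ oplus n α 1 = oplus n (α.erase a) 1 := by
  ext x
  simp only [mem_inter, mem_union, mem_oplus, mem_erase, mem_singleton]
  grind

lemma oplus_erase_union_inter_ominus_one (ha2 : a + 2 ∉ α) (ha3 : a + 3 ∈ α) :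
    (oplus n (α.erase a) 1 ∪ {a + 2}) ∩ ominus n α 1 =
      insert (a + 2) (oplus n (α ∩ ominus n α 2) 1) := by
  ext x
  have hshift : x - 1 + 2 = x + 1 := by ring
  simp only [mem_inter, mem_union, mem_oplus, mem_ominus, mem_erase, mem_singleton, mem_insert,
    hshift]
  grind

end OuterNeighbor

theorem outer_neighbor_inter_immediate_general (n : ℕ)
    (α β : Finset (ZMod (2 * n + 2)))
    (hα : IsStable n α) (hαl : ¬ IsTight n α)
    (hout : OuterNbr n α β) :
    (β ∩ oplus n α 1).card = n - 1 ∧ (β ∩ ominus n α 1).card = n - 1 := by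
  obtain ⟨hdisj, a, ha, rfl⟩ := hout
  have ha1 : a + 1 ∉ α := hα.add_one_notMem ha
  have ha2 : a + 2 ∉ α := disjoint_right.1 hdisj (by simp)
  have ha2' : a + 2 ∉ oplus n (α ∩ ominus n α 2) 1 := by
    simpa [add_sub_assoc, show (2 : ZMod (2 * n + 2)) - 1 = 1 by norm_num] using fun h _ => ha1 h
  constructor
  · rw [oplus_erase_union_inter_oplus_one ha1, card_oplus, card_erase_of_mem ha, hα.1]
  · rw [oplus_erase_union_inter_ominus_one ha2 (hα.add_three_mem hαl ha ha2),
      card_insert_of_notMem ha2', card_oplus]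
    have := hα.card_inter_ominus_two_add_two hαl
    omega

/-- If `β` is an outer neighbor of a loose stable n-set `α`, then
`|β ∩ (α ⊕ 1)| = n - 1` and `|β ∩ (α ⊖ 1)| = n - 1`. -/
theorem outer_neighbor_inter_immediate (n : ℕ) (hn : 1 ≤ n)
    (α β : Finset (ZMod (2 * n + 2)))
    (hα : IsStable n α) (hαl : ¬ IsTight n α)
    (hβ : IsStable n β) (hout : OuterNbr n α β) :
    (β ∩ oplus n α 1).card = n - 1 ∧ (β ∩ ominus n α 1).card = n - 1 :=
  outer_neighbor_inter_immediate_general n α β hα hαl hout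
end

section
/- Let n ≥ 1, let α be a loose stable n-set in ZMod (2n+2), and let β₁ ≠ β₂ be two outer neighbors of α. Then α is the unique common neighbor of β₁ and β₂ in SG_{n,2}: the only stable n-set disjoint from both β₁ and β₂ is α. (Hence the edge {β₁, β₂} of the neighborhood complex of SG_{n,2} is contained in a unique facet.) -/
/-!
The two outer neighbors `β₁, β₂` of `α`, built from distinct `a, b ∈ α`, together cover
`(α ⊕ 1) ∪ {a + 2, b + 2}`. Since `α` is stable, `a + 2, b + 2 ∉ α ⊕ 1`, so `β₁ ∪ β₂` has
`n + 2` elements and its complement has exactly `n`. A common neighbor of `β₁` and `β₂` is an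
`n`-set inside that complement, hence equal to it; as `α` is one, it is the only one.
-/

namespace Finset

variable {G : Type*} [AddGroupWithOne G] [DecidableEq G]

lemma image_erase_add_one_union_image_erase_add_one {α : Finset G} {a b : G} (hab : a ≠ b) :
    ((α.erase a).image (· + 1) ∪ {a + 2}) ∪ ((α.erase b).image (· + 1) ∪ {b + 2}) =
      α.image (· + 1) ∪ {a + 2, b + 2} := by
  have herase : α.erase a ∪ α.erase b = α := by
    ext x
    simp only [mem_union, mem_erase]
    by_cases hxa : x = a
    · simp [hxa, hab]
    · simp [hxa]
  rw [union_union_union_comm, ← image_union, herase, ← insert_eq]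

lemma add_two_notMem_image_add_one {α : Finset G} (hα : ∀ i, ¬(i ∈ α ∧ i + 1 ∈ α))
    {c : G} (hc : c ∈ α) : c + 2 ∉ α.image (· + 1) := by
  intro h
  obtain ⟨d, hd, hdc⟩ := mem_image.mp h
  have : d = c + 1 := add_right_cancel (b := 1) <| by rw [hdc, add_assoc, one_add_one_eq_two]
  exact hα c ⟨hc, this ▸ hd⟩

lemma card_image_add_one_union_pair {α : Finset G} (hα : ∀ i, ¬(i ∈ α ∧ i + 1 ∈ α))
    {a b : G} (ha : a ∈ α) (hb : b ∈ α) (hab : a ≠ b) :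
    (α.image (· + 1) ∪ {a + 2, b + 2}).card = α.card + 2 := by
  have hdisj : Disjoint (α.image (· + 1)) {a + 2, b + 2} := by
    simp only [disjoint_insert_right, disjoint_singleton_right]
    exact ⟨add_two_notMem_image_add_one hα ha, add_two_notMem_image_add_one hα hb⟩
  rw [card_union_of_disjoint hdisj, card_image_of_injective _ (add_left_injective 1),
    card_pair fun h => hab (add_right_cancel h)]

end Finset

open Finset

theorem outer_neighbors_unique_common_neighbor_general (n : ℕ)
    (α β₁ β₂ : Finset (ZMod (2 * n + 2)))
    (hα : IsStable n α)
    (hout₁ : OuterNbr n α β₁)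
    (hout₂ : OuterNbr n α β₂)
    (hne : β₁ ≠ β₂) :
    {γ : Finset (ZMod (2 * n + 2)) |
      IsStable n γ ∧ Disjoint γ β₁ ∧ Disjoint γ β₂} = {α} := by
  obtain ⟨hd₁, a, ha, hβ₁⟩ := hout₁
  obtain ⟨hd₂, b, hb, hβ₂⟩ := hout₂
  have hab : a ≠ b := by
    rintro rfl
    exact hne (hβ₁.trans hβ₂.symm)
  have hcard : (β₁ ∪ β₂).card = n + 2 := by
    rw [hβ₁, hβ₂, oplus, oplus, image_erase_add_one_union_image_erase_add_one hab,
      card_image_add_one_union_pair hα.2 ha hb hab, hα.1]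
  have hcompl : ∀ γ, IsStable n γ → Disjoint γ β₁ → Disjoint γ β₂ → (β₁ ∪ β₂)ᶜ = γ :=
    fun γ hγ h₁ h₂ => compl_eq_of_disjoint_of_card_add_eq
      (disjoint_union_left.2 ⟨h₁.symm, h₂.symm⟩) (by rw [hcard, hγ.1, card_univ, ZMod.card]; ring)
  ext γ
  refine ⟨fun ⟨hγ, h₁, h₂⟩ => ?_, fun h => (Set.mem_singleton_iff.1 h) ▸ ⟨hα, hd₁, hd₂⟩⟩
  rw [Set.mem_singleton_iff, ← hcompl γ hγ h₁ h₂, hcompl α hα hd₁ hd₂]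

/-- If `β₁ ≠ β₂` are two outer neighbors of a loose stable n-set `α`, then `α`
is the unique common neighbor of `β₁` and `β₂` in `SG_{n,2}`. -/
theorem outer_neighbors_unique_common_neighbor (n : ℕ) (hn : 1 ≤ n)
    (α β₁ β₂ : Finset (ZMod (2 * n + 2)))
    (hα : IsStable n α) (hαl : ¬ IsTight n α)
    (hβ₁ : IsStable n β₁) (hout₁ : OuterNbr n α β₁)
    (hβ₂ : IsStable n β₂) (hout₂ : OuterNbr n α β₂)
    (hne : β₁ ≠ β₂) :
    {γ : Finset (ZMod (2 * n + 2)) |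
      IsStable n γ ∧ Disjoint γ β₁ ∧ Disjoint γ β₂} = {α} :=
  outer_neighbors_unique_common_neighbor_general n α β₁ β₂ hα hout₁ hout₂ hne
end

section
/- Let n ≥ 1, let α be a tight stable n-set in ZMod (2n+2), let η be its unique outer neighbor, and let p be the unique element of η having the same parity as the elements of α. Then (η \ {p}) ∪ {p − 1} and (η \ {p}) ∪ {p + 1} are two distinct tight stable n-sets all of whose elements have parity opposite to that of the elements of α, and each of them is adjacent to α in SG_{n,2}. -/
/-!
Write `α = {i, i + 2, …, i + 2(n - 1)}`. An outer neighbor moves one element `a` of `α` two steps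
forward and the others one step; disjointness from `α` forces `a = i + 2(n - 1)`, since otherwise
`a + 2 ∈ α`. Hence `η = {i + 1, i + 3, …, i + 2n - 3} ∪ {i + 2n}`, and `p = i + 2n` is its only
element with the parity of `i`. Adjoining `p - 1` or `p + 1 = i - 1` to `η \ {p}` yields the tight
sets starting at `i + 1` and `i - 1`. All elements of a tight set share one parity, so tight sets
are stable, and tight sets of opposite parities are disjoint.
-/

def twoStep {R : Type*} [Semiring R] [DecidableEq R] (j : R) (l : ℕ) : Finset R :=
  (Finset.range l).image fun k : ℕ => j + 2 * (k : R)

section Progression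

variable {R : Type*} [CommRing R] [DecidableEq R]

lemma mem_twoStep {j x : R} {l : ℕ} : x ∈ twoStep j l ↔ ∃ k < l, j + 2 * (k : R) = x := by
  simp [twoStep]

lemma self_mem_twoStep (j : R) {l : ℕ} (hl : l ≠ 0) : j ∈ twoStep j l :=
  mem_twoStep.mpr ⟨0, Nat.pos_of_ne_zero hl, by simp⟩

lemma twoStep_succ (j : R) (l : ℕ) : twoStep j (l + 1) = insert (j + 2 * l) (twoStep j l) := by
  rw [twoStep, Finset.range_add_one, Finset.image_insert, twoStep]

lemma twoStep_succ' (j : R) (l : ℕ) : twoStep j (l + 1) = insert j (twoStep (j + 2) l) := by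
  rw [twoStep, Finset.range_add_one', Finset.image_insert, Finset.map_eq_image,
    Finset.image_image, twoStep]
  congr 1
  · simp
  · congr 1; funext k
    show j + 2 * ((k + 1 : ℕ) : R) = j + 2 + 2 * (k : R)
    push_cast; ring

lemma image_add_twoStep (j c : R) (l : ℕ) :
    (twoStep j l).image (· + c) = twoStep (j + c) l := by
  rw [twoStep, twoStep, Finset.image_image]
  congr 1; funext k; simp only [Function.comp_apply]; ring

end Progression

section Parity

variable {n : ℕ}

lemma parity_add (x y : ZMod (2 * n + 2)) : parity n (x + y) = parity n x + parity n y :=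
  map_add _ x y

lemma parity_sub (x y : ZMod (2 * n + 2)) : parity n (x - y) = parity n x + parity n y := by
  rw [parity, map_sub, CharTwo.sub_eq_add]; rfl

lemma parity_one : parity n 1 = 1 := map_one _

lemma parity_add_two_mul (x y : ZMod (2 * n + 2)) : parity n (x + 2 * y) = parity n x := by
  rw [parity_add, add_eq_left, parity, map_mul, map_ofNat, show (2 : ZMod 2) = 0 from rfl,
    zero_mul]

lemma parity_add_one_ne (x : ZMod (2 * n + 2)) : parity n (x + 1) ≠ parity n x := by
  rw [parity_add, parity_one]; exact add_ne_left.mpr one_ne_zero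

lemma parity_sub_one_ne (x : ZMod (2 * n + 2)) : parity n (x - 1) ≠ parity n x := by
  rw [parity_sub, parity_one]; exact add_ne_left.mpr one_ne_zero

lemma parity_of_mem_twoStep {j x : ZMod (2 * n + 2)} {l : ℕ} (hx : x ∈ twoStep j l) :
    parity n x = parity n j := by
  obtain ⟨k, -, rfl⟩ := mem_twoStep.mp hx
  exact parity_add_two_mul j k

lemma parity_ne_of_mem_twoStep {j j' a b : ZMod (2 * n + 2)} {l l' : ℕ}
    (hj : parity n j ≠ parity n j') (ha : a ∈ twoStep j l) (hb : b ∈ twoStep j' l') :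
    parity n a ≠ parity n b := by
  rwa [parity_of_mem_twoStep ha, parity_of_mem_twoStep hb]

lemma disjoint_twoStep {j j' : ZMod (2 * n + 2)} {l l' : ℕ} (hj : parity n j ≠ parity n j') :
    Disjoint (twoStep j l) (twoStep j' l') :=
  Finset.disjoint_left.mpr fun _ ha hb => parity_ne_of_mem_twoStep hj ha hb rfl

end Parity

section Tight

variable {n : ℕ}

lemma two_mul_natCast_add_two : 2 * (n : ZMod (2 * n + 2)) + 2 = 0 := by
  exact_mod_cast ZMod.natCast_self (2 * n + 2)

lemma eq_of_two_mul_natCast_eq {k₁ k₂ : ℕ} (h₁ : k₁ ≤ n) (h₂ : k₂ ≤ n)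
    (h : 2 * (k₁ : ZMod (2 * n + 2)) = 2 * k₂) : k₁ = k₂ := by
  have h' : ((2 * k₁ : ℕ) : ZMod (2 * n + 2)) = ((2 * k₂ : ℕ) : ZMod (2 * n + 2)) := by
    push_cast; exact h
  have hv := congrArg ZMod.val h'
  rw [ZMod.val_natCast_of_lt (by omega), ZMod.val_natCast_of_lt (by omega)] at hv
  omega

lemma card_twoStep (j : ZMod (2 * n + 2)) {l : ℕ} (hl : l ≤ n + 1) : (twoStep j l).card = l := by
  rw [twoStep, Finset.card_image_of_injOn, Finset.card_range]
  intro k₁ h₁ k₂ h₂ h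
  simp only [Finset.coe_range, Set.mem_Iio] at h₁ h₂
  exact eq_of_two_mul_natCast_eq (by omega) (by omega) (add_left_cancel h)

lemma add_two_mul_not_mem_twoStep (j : ZMod (2 * n + 2)) {l : ℕ} (hl : l ≤ n) :
    j + 2 * (l : ZMod (2 * n + 2)) ∉ twoStep j l := by
  intro hx
  obtain ⟨k, hk, h⟩ := mem_twoStep.mp hx
  have := eq_of_two_mul_natCast_eq (by omega) hl (add_left_cancel h)
  omega

lemma sub_two_not_mem_twoStep (j : ZMod (2 * n + 2)) : j - 2 ∉ twoStep j n := by
  have h : j - 2 = j + 2 * (n : ZMod (2 * n + 2)) := by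
    linear_combination -two_mul_natCast_add_two (n := n)
  exact h ▸ add_two_mul_not_mem_twoStep j le_rfl

lemma isTight_twoStep (j : ZMod (2 * n + 2)) : IsTight n (twoStep j n) := ⟨j, rfl⟩

lemma isStable_twoStep (j : ZMod (2 * n + 2)) : IsStable n (twoStep j n) := by
  refine ⟨card_twoStep j (Nat.le_succ n), fun x ⟨hx, hx1⟩ => ?_⟩
  exact parity_add_one_ne x ((parity_of_mem_twoStep hx1).trans (parity_of_mem_twoStep hx).symm)

lemma twoStep_ne_twoStep_sub_two (hn : n ≠ 0) (j : ZMod (2 * n + 2)) :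
    twoStep j n ≠ twoStep (j - 2) n := by
  intro h
  exact sub_two_not_mem_twoStep j (h ▸ self_mem_twoStep (j - 2) hn)

lemma sgAdj_twoStep (hn : n ≠ 0) {j j' : ZMod (2 * n + 2)} (hj : parity n j ≠ parity n j') :
    SGAdj n (twoStep j n) (twoStep j' n) := by
  have hjmem := self_mem_twoStep j hn
  have hdisj : Disjoint (twoStep j n) (twoStep j' n) := disjoint_twoStep hj
  refine ⟨isStable_twoStep j, isStable_twoStep j', fun h => ?_, hdisj⟩
  exact Finset.disjoint_left.mp hdisj hjmem (h ▸ hjmem)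

end Tight

section OuterNeighbor

variable {m : ℕ}

lemma eq_of_outerNbr_twoStep {i : ZMod (2 * (m + 1) + 2)} {η : Finset (ZMod (2 * (m + 1) + 2))}
    (h : OuterNbr (m + 1) (twoStep i (m + 1)) η) :
    η = insert (i + 2 * m + 2) (twoStep (i + 1) m) := by
  obtain ⟨hdisj, a, ha, rfl⟩ := h
  obtain ⟨k, hk, rfl⟩ := mem_twoStep.mp ha
  have hkm : k = m := by
    by_contra hne
    refine Finset.disjoint_left.mp hdisj (mem_twoStep.mpr ⟨k + 1, by omega, ?_⟩)
      (Finset.mem_union_right _ (Finset.mem_singleton_self _))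
    push_cast; ring
  subst hkm
  rw [twoStep_succ, Finset.erase_insert (add_two_mul_not_mem_twoStep i (by omega)), oplus,
    image_add_twoStep, Finset.union_comm, ← Finset.insert_eq]

end OuterNeighbor

theorem outer_neighbor_adjacent_tights_general (n : ℕ) (hn : 1 ≤ n)
    (α η : Finset (ZMod (2 * n + 2)))
    (hαt : IsTight n α)
    (hout : OuterNbr n α η)
    (p : ZMod (2 * n + 2)) (hp : p ∈ η)
    (hpar : ∀ a ∈ α, parity n p = parity n a) :
    insert (p - 1) (η.erase p) ≠ insert (p + 1) (η.erase p) ∧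
    IsStable n (insert (p - 1) (η.erase p)) ∧ IsTight n (insert (p - 1) (η.erase p)) ∧
    IsStable n (insert (p + 1) (η.erase p)) ∧ IsTight n (insert (p + 1) (η.erase p)) ∧
    (∀ b ∈ insert (p - 1) (η.erase p), ∀ a ∈ α, parity n b ≠ parity n a) ∧
    (∀ b ∈ insert (p + 1) (η.erase p), ∀ a ∈ α, parity n b ≠ parity n a) ∧
    SGAdj n α (insert (p - 1) (η.erase p)) ∧
    SGAdj n α (insert (p + 1) (η.erase p)) := by
  obtain ⟨m, rfl⟩ : ∃ m, n = m + 1 := ⟨n - 1, by omega⟩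
  obtain ⟨i, rfl⟩ := hαt
  rw [eq_of_outerNbr_twoStep hout] at hp ⊢
  have hpi : parity (m + 1) p = parity (m + 1) i := hpar i (self_mem_twoStep i m.succ_ne_zero)
  have hpS : p ∉ twoStep (i + 1) m := fun hpS =>
    parity_add_one_ne i ((parity_of_mem_twoStep hpS).symm.trans hpi)
  obtain rfl : p = i + 2 * m + 2 := (Finset.mem_insert.mp hp).resolve_right hpS
  have hA : insert (i + 2 * m + 2 - 1) (twoStep (i + 1) m) = twoStep (i + 1) (m + 1) := by
    rw [twoStep_succ]; congr 1; ring
  -- `i + 2m + 3 = i - 1` because `2m + 4 = 0`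
  have hB : insert (i + 2 * m + 2 + 1) (twoStep (i + 1) m) = twoStep (i - 1) (m + 1) := by
    have h0 := two_mul_natCast_add_two (n := m + 1)
    push_cast at h0
    rw [twoStep_succ', show i - 1 + 2 = i + 1 by ring]
    congr 1; linear_combination h0
  rw [Finset.erase_insert hpS, hA, hB]
  have hA_par := parity_add_one_ne i
  have hB_par := parity_sub_one_ne i
  have hAB := twoStep_ne_twoStep_sub_two m.succ_ne_zero (i + 1)
  rw [show i + 1 - 2 = i - 1 by ring] at hAB
  refine ⟨hAB,
    isStable_twoStep _, isTight_twoStep _, isStable_twoStep _, isTight_twoStep _,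
    fun b hb a ha => parity_ne_of_mem_twoStep hA_par hb ha,
    fun b hb a ha => parity_ne_of_mem_twoStep hB_par hb ha,
    sgAdj_twoStep m.succ_ne_zero hA_par.symm, sgAdj_twoStep m.succ_ne_zero hB_par.symm⟩

/-- Let `α` be a tight stable n-set, `η` its outer neighbor, and `p` the element
of `η` of the same parity as the elements of `α`. Then `(η \ {p}) ∪ {p - 1}` and
`(η \ {p}) ∪ {p + 1}` are two distinct tight stable n-sets of parity opposite
to `α`, each adjacent to `α` in `SG_{n,2}`. -/
theorem outer_neighbor_adjacent_tights (n : ℕ) (hn : 1 ≤ n)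
    (α η : Finset (ZMod (2 * n + 2)))
    (hα : IsStable n α) (hαt : IsTight n α)
    (hη : IsStable n η) (hout : OuterNbr n α η)
    (p : ZMod (2 * n + 2)) (hp : p ∈ η)
    (hpar : ∀ a ∈ α, parity n p = parity n a) :
    insert (p - 1) (η.erase p) ≠ insert (p + 1) (η.erase p) ∧
    IsStable n (insert (p - 1) (η.erase p)) ∧ IsTight n (insert (p - 1) (η.erase p)) ∧
    IsStable n (insert (p + 1) (η.erase p)) ∧ IsTight n (insert (p + 1) (η.erase p)) ∧
    (∀ b ∈ insert (p - 1) (η.erase p), ∀ a ∈ α, parity n b ≠ parity n a) ∧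
    (∀ b ∈ insert (p + 1) (η.erase p), ∀ a ∈ α, parity n b ≠ parity n a) ∧
    SGAdj n α (insert (p - 1) (η.erase p)) ∧
    SGAdj n α (insert (p + 1) (η.erase p)) :=
  outer_neighbor_adjacent_tights_general n hn α η hαt hout p hp hpar
end
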